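/- If a sequence of events (e_i) admits a function γ on its Op¹ events satisfying FS1 and FS2, then the canonically defined sequence of states (D_i) — D_0 = ∅, and D_{i+1} obtained from D_i by adding kval(e_i) for non-failed Add events, removing kval(e_i) for non-failed Rem events, and unchanged otherwise — witnesses the state-based specification; in particular, for every i with χ(e_i) ≠ f, kval(e_i) ∈ D_i if and only if χ(e_i) = 1. -/

import Mathlib

/-!
An element `k` is in the state `D i` exactly when some successful `Add` of `k` with status `0`
occurred before `i` and has not yet been matched, via `γ`, by a successful `Rem`. By FS2 such a
live `Add` is unique per key and forbids any later status-`0` event on that key, while FS1 provides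
one for every status-`1` event; so the invariant is preserved by every event and yields the claim.
-/

/-- Event type: Add, Rem, or Contains. -/
inductive EType | add | rem | cnt
deriving DecidableEq

/-- Status of an event: 0, 1, or f (failed). -/
inductive Status | s0 | s1 | sf
deriving DecidableEq

open EType Status

def SatisfiesFS1 (typ : ℕ → EType) (kval : ℕ → ℕ) (χ : ℕ → Status) (γ : ℕ → ℕ) : Prop :=
  ∀ a, χ a = s1 →
    γ a < a ∧ typ (γ a) = add ∧ χ (γ a) = s0 ∧ kval (γ a) = kval a ∧
    ¬ ∃ r, typ r = rem ∧ χ r = s1 ∧ γ r = γ a ∧ γ a < r ∧ r < a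

def SatisfiesFS2 (typ : ℕ → EType) (kval : ℕ → ℕ) (χ : ℕ → Status) (γ : ℕ → ℕ) : Prop :=
  ∀ a b, a < b → typ a = add → χ a = s0 → χ b = s0 → kval a = kval b →
    ∃ r, a < r ∧ r < b ∧ typ r = rem ∧ χ r = s1 ∧ γ r = a

structure IsLiveAdd (typ : ℕ → EType) (χ : ℕ → Status) (γ : ℕ → ℕ) (i a : ℕ) : Prop where
  lt : a < i
  typ_eq : typ a = add
  status_eq : χ a = s0
  not_removed : ∀ r < i, typ r = rem → χ r = s1 → γ r ≠ a

def HasLiveAdd (typ : ℕ → EType) (kval : ℕ → ℕ) (χ : ℕ → Status) (γ : ℕ → ℕ) (i k : ℕ) : Prop :=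
  ∃ a, IsLiveAdd typ χ γ i a ∧ kval a = k

section

variable {typ : ℕ → EType} {kval : ℕ → ℕ} {χ : ℕ → Status} {γ : ℕ → ℕ} {i a b k : ℕ}

theorem SatisfiesFS1.gamma_lt (hFS1 : SatisfiesFS1 typ kval χ γ) {r : ℕ} (hr : χ r = s1) :
    γ r < r :=
  (hFS1 r hr).1

theorem SatisfiesFS1.kval_gamma (hFS1 : SatisfiesFS1 typ kval χ γ) {r : ℕ} (hr : χ r = s1) :
    kval (γ r) = kval r :=
  (hFS1 r hr).2.2.2.1

theorem IsLiveAdd.succ (ha : IsLiveAdd typ χ γ i a)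
    (hi : typ i = rem → χ i = s1 → γ i ≠ a) : IsLiveAdd typ χ γ (i + 1) a where
  lt := ha.lt.trans i.lt_succ_self
  typ_eq := ha.typ_eq
  status_eq := ha.status_eq
  not_removed r hr := by
    rcases Nat.lt_succ_iff_lt_or_eq.mp hr with hr | rfl
    · exact ha.not_removed r hr
    · exact hi

theorem IsLiveAdd.of_succ (ha : IsLiveAdd typ χ γ (i + 1) a) (hai : a ≠ i) :
    IsLiveAdd typ χ γ i a where
  lt := lt_of_le_of_ne (Nat.lt_succ_iff.mp ha.lt) hai
  typ_eq := ha.typ_eq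
  status_eq := ha.status_eq
  not_removed r hr := ha.not_removed r (hr.trans i.lt_succ_self)

theorem isLiveAdd_succ_self (hFS1 : SatisfiesFS1 typ kval χ γ) (ht : typ i = add)
    (hχ : χ i = s0) : IsLiveAdd typ χ γ (i + 1) i where
  lt := i.lt_succ_self
  typ_eq := ht
  status_eq := hχ
  not_removed _ hr _ hrχ := (lt_of_lt_of_le (hFS1.gamma_lt hrχ) (Nat.lt_succ_iff.mp hr)).ne

theorem isLiveAdd_gamma (hFS1 : SatisfiesFS1 typ kval χ γ) (hi : χ i = s1) :
    IsLiveAdd typ χ γ i (γ i) := by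
  obtain ⟨hlt, ht, hχ, -, hno⟩ := hFS1 i hi
  refine ⟨hlt, ht, hχ, fun r hr hrt hrχ hγr => ?_⟩
  rcases lt_or_ge (γ i) r with h | h
  · exact hno ⟨r, hrt, hrχ, hγr, h, hr⟩
  · have := hFS1.gamma_lt hrχ
    omega

/-- Two live `Add`s of the same key would violate FS2: the earlier one would need a `Rem`
before the later one. -/
theorem IsLiveAdd.eq_of_kval_eq (hFS2 : SatisfiesFS2 typ kval χ γ) (ha : IsLiveAdd typ χ γ i a)
    (hb : IsLiveAdd typ χ γ i b) (hab : kval a = kval b) : a = b := by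
  have key : ∀ {a b}, IsLiveAdd typ χ γ i a → IsLiveAdd typ χ γ i b → kval a = kval b → ¬ a < b :=
    fun ha hb hab hlt => by
      obtain ⟨r, -, hrb, hrt, hrχ, hγr⟩ := hFS2 _ _ hlt ha.typ_eq ha.status_eq hb.status_eq hab
      exact ha.not_removed r (hrb.trans hb.lt) hrt hrχ hγr
  rcases lt_trichotomy a b with h | h | h
  · exact (key ha hb hab h).elim
  · exact h
  · exact (key hb ha hab.symm h).elim

theorem IsLiveAdd.status_ne_s0 (hFS2 : SatisfiesFS2 typ kval χ γ) (ha : IsLiveAdd typ χ γ i a)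
    (hk : kval a = kval i) : χ i ≠ s0 := fun hχ => by
  obtain ⟨r, -, hri, hrt, hrχ, hγr⟩ := hFS2 a i ha.lt ha.typ_eq ha.status_eq hχ hk
  exact ha.not_removed r hri hrt hrχ hγr

theorem hasLiveAdd_self_iff (hFS1 : SatisfiesFS1 typ kval χ γ) (hFS2 : SatisfiesFS2 typ kval χ γ)
    (hi : χ i ≠ sf) : HasLiveAdd typ kval χ γ i (kval i) ↔ χ i = s1 := by
  constructor
  · rintro ⟨a, ha, hk⟩
    cases hχ : χ i
    · exact (ha.status_ne_s0 hFS2 hk hχ).elim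
    · rfl
    · exact (hi hχ).elim
  · intro hχ
    exact ⟨γ i, isLiveAdd_gamma hFS1 hχ, hFS1.kval_gamma hχ⟩

theorem hasLiveAdd_succ_iff_of_ne (hadd : ¬ (typ i = add ∧ χ i = s0 ∧ kval i = k))
    (hrem : typ i = rem → χ i = s1 → kval (γ i) ≠ k) :
    HasLiveAdd typ kval χ γ (i + 1) k ↔ HasLiveAdd typ kval χ γ i k := by
  constructor
  · rintro ⟨a, ha, hk⟩
    refine ⟨a, ha.of_succ ?_, hk⟩
    rintro rfl
    exact hadd ⟨ha.typ_eq, ha.status_eq, hk⟩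
  · rintro ⟨a, ha, hk⟩
    exact ⟨a, ha.succ fun ht hχ hγ => hrem ht hχ (hγ ▸ hk), hk⟩

theorem hasLiveAdd_succ_of_add (hFS1 : SatisfiesFS1 typ kval χ γ)
    (hFS2 : SatisfiesFS2 typ kval χ γ) (ht : typ i = add) (hi : χ i ≠ sf) :
    HasLiveAdd typ kval χ γ (i + 1) (kval i) := by
  cases hχ : χ i
  · exact ⟨i, isLiveAdd_succ_self hFS1 ht hχ, rfl⟩
  · obtain ⟨a, ha, hk⟩ := (hasLiveAdd_self_iff hFS1 hFS2 hi).mpr hχ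
    exact ⟨a, ha.succ fun hr => by simp [ht] at hr, hk⟩
  · exact (hi hχ).elim

/-- A successful `Rem` of `k` must point to the unique live `Add` of `k`, which it kills. -/
theorem not_hasLiveAdd_succ_of_rem (hFS1 : SatisfiesFS1 typ kval χ γ)
    (hFS2 : SatisfiesFS2 typ kval χ γ) (ht : typ i = rem) (hi : χ i ≠ sf) :
    ¬ HasLiveAdd typ kval χ γ (i + 1) (kval i) := by
  rintro ⟨a, ha, hk⟩
  have ha' : IsLiveAdd typ χ γ i a := ha.of_succ fun hai => by simp [← hai, ha.typ_eq] at ht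
  have hχ : χ i = s1 := (hasLiveAdd_self_iff hFS1 hFS2 hi).mp ⟨a, ha', hk⟩
  have hγ : γ i = a :=
    (isLiveAdd_gamma hFS1 hχ).eq_of_kval_eq hFS2 ha' ((hFS1.kval_gamma hχ).trans hk.symm)
  exact ha.not_removed i i.lt_succ_self ht hχ hγ

theorem mem_iff_hasLiveAdd (hFS1 : SatisfiesFS1 typ kval χ γ) (hFS2 : SatisfiesFS2 typ kval χ γ)
    {D : ℕ → Finset ℕ} (hD0 : D 0 = ∅)
    (hDadd : ∀ i, typ i = add → χ i ≠ sf → D (i + 1) = insert (kval i) (D i))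
    (hDrem : ∀ i, typ i = rem → χ i ≠ sf → D (i + 1) = (D i).erase (kval i))
    (hDsame : ∀ i, typ i = cnt ∨ χ i = sf → D (i + 1) = D i) (i k : ℕ) :
    k ∈ D i ↔ HasLiveAdd typ kval χ γ i k := by
  induction i generalizing k with
  | zero =>
    simp only [hD0, Finset.notMem_empty, false_iff]
    exact fun ⟨_, ha, _⟩ => absurd ha.lt (Nat.not_lt_zero _)
  | succ i ih =>
    by_cases hsf : χ i = sf
    · rw [hDsame i (.inr hsf), ih, hasLiveAdd_succ_iff_of_ne] <;> simp [hsf]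
    cases ht : typ i
    · rw [hDadd i ht hsf, Finset.mem_insert]
      by_cases hk : k = kval i
      · subst hk
        exact iff_of_true (.inl rfl) (hasLiveAdd_succ_of_add hFS1 hFS2 ht hsf)
      · rw [ih, hasLiveAdd_succ_iff_of_ne (by simp [Ne.symm hk]) (by simp [ht])]
        simp [hk]
    · rw [hDrem i ht hsf, Finset.mem_erase]
      by_cases hk : k = kval i
      · subst hk
        exact iff_of_false (fun h => h.1 rfl) (not_hasLiveAdd_succ_of_rem hFS1 hFS2 ht hsf)
      · have hγ : typ i = rem → χ i = s1 → kval (γ i) ≠ k := fun _ hχ =>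
          (hFS1.kval_gamma hχ).trans_ne (Ne.symm hk)
        rw [ih, hasLiveAdd_succ_iff_of_ne (by simp [ht]) hγ]
        simp [hk]
    · rw [hDsame i (.inl ht), ih, hasLiveAdd_succ_iff_of_ne] <;> simp [ht]

end

/-- If a sequence of events admits a function γ on its Op¹ events
satisfying FS1 and FS2, then the canonically defined sequence of states (D_i)
— D 0 = ∅, D_{i+1} obtained from D_i by adding kval(e_i) for non-failed Add
events, removing kval(e_i) for non-failed Rem events, unchanged otherwise —
witnesses the state-based specification; in particular, for every i with
χ(e_i) ≠ f, kval(e_i) ∈ D_i iff χ(e_i) = 1. -/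
theorem stmt3
    (typ : ℕ → EType) (kval : ℕ → ℕ) (χ : ℕ → Status) (γ : ℕ → ℕ)
    (FS1 : ∀ a, χ a = s1 →
      γ a < a ∧ typ (γ a) = add ∧ χ (γ a) = s0 ∧ kval (γ a) = kval a ∧
      ¬ ∃ r, typ r = rem ∧ χ r = s1 ∧ γ r = γ a ∧ γ a < r ∧ r < a)
    (FS2 : ∀ a b, a < b → typ a = add → χ a = s0 → χ b = s0 → kval a = kval b →
      ∃ r, a < r ∧ r < b ∧ typ r = rem ∧ χ r = s1 ∧ γ r = a)
    (D : ℕ → Finset ℕ)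
    (hD0 : D 0 = ∅)
    (hDadd : ∀ i, typ i = add → χ i ≠ sf → D (i + 1) = insert (kval i) (D i))
    (hDrem : ∀ i, typ i = rem → χ i ≠ sf → D (i + 1) = (D i).erase (kval i))
    (hDsame : ∀ i, typ i = cnt ∨ χ i = sf → D (i + 1) = D i) :
    ∀ i, χ i ≠ sf → (kval i ∈ D i ↔ χ i = s1) := fun i hi =>
  (mem_iff_hasLiveAdd FS1 FS2 hD0 hDadd hDrem hDsame i (kval i)).trans
    (hasLiveAdd_self_iff FS1 FS2 hi)
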